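/- Let β ∈ Φ_lg, γ ∈ Δ, and α = s_γ(β). If (β|γ) > 0 then L(α) = L(β) + 1 (so β →_γ α); if (β|γ) = 0 then α = β; if (β|γ) < 0 then L(α) = L(β) − 1 (so α →_γ β). -/

import Mathlib

open scoped RealInnerProductSpace Classical

noncomputable section

variable {V : Type} [NormedAddCommGroup V] [InnerProductSpace ℝ V] [FiniteDimensional ℝ V]

/-- The orthogonal reflection of `V` in the hyperplane orthogonal to `α`
(the reflection `s_α` when `α` is a root). -/
def sref (α : V) : V ≃ₗᵢ[ℝ] V := Submodule.reflection (Submodule.span ℝ {α})ᗮ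

/-- The pairing `⟨β, γ∨⟩ = 2(β|γ)/(γ|γ)` of a vector with the coroot of `γ`. -/
def cpair (β γ : V) : ℝ := 2 * ⟪β, γ⟫ / ⟪γ, γ⟫

/-- An irreducible reduced (crystallographic) root system in the real inner product
space `V`, the inner product being invariant under the Weyl group (automatic, since
reflections are isometries), normalized so that the shortest roots have squared length `1`. -/
structure NRootSystem (V : Type) [NormedAddCommGroup V] [InnerProductSpace ℝ V]
    [FiniteDimensional ℝ V] where
  Φ : Finset V
  nonempty : Φ.Nonempty
  zero_not_mem : (0 : V) ∉ Φ
  span_eq_top : Submodule.span ℝ (Φ : Set V) = ⊤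
  reduced : ∀ α ∈ Φ, ∀ t : ℝ, t • α ∈ Φ → t = 1 ∨ t = -1
  pairing_int : ∀ α ∈ Φ, ∀ β ∈ Φ, ∃ n : ℤ, 2 * ⟪β, α⟫ = n * ⟪α, α⟫
  reflect_mem : ∀ α ∈ Φ, ∀ β ∈ Φ, sref α β ∈ Φ
  irreducible : ∀ S : Finset V, S ⊆ Φ → S.Nonempty → (Φ \ S).Nonempty →
    ∃ α ∈ S, ∃ β ∈ Φ \ S, ⟪α, β⟫ ≠ 0
  norm_one_le : ∀ α ∈ Φ, 1 ≤ ⟪α, α⟫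
  exists_norm_one : ∃ α ∈ Φ, ⟪α, α⟫ = 1

namespace NRootSystem

variable (R : NRootSystem V)

/-- `r`, the maximal squared length of a root. -/
def r : ℝ := R.Φ.sup' R.nonempty fun α => ⟪α, α⟫

/-- long roots -/
def IsLong (α : V) : Prop := α ∈ R.Φ ∧ ⟪α, α⟫ = R.r

/-- short roots -/
def IsShort (α : V) : Prop := α ∈ R.Φ ∧ ⟪α, α⟫ < R.r

/-- The Weyl group `W`, generated by the reflections in the roots. -/
def Weyl : Subgroup (V ≃ₗᵢ[ℝ] V) := Subgroup.closure (sref '' (R.Φ : Set V))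

end NRootSystem

/-- The standard parabolic subgroup `W_I` generated by the reflections in `I ⊆ Δ`. -/
def WeylP (I : Finset V) : Subgroup (V ≃ₗᵢ[ℝ] V) := Subgroup.closure (sref '' (I : Set V))

/-- A base (set of simple roots) `Δ` of the root system, together with the
integral coordinates `coeff γ α` of each root `γ` in the basis `Δ`; every root is a
nonnegative or a nonpositive integral combination of the simple roots. -/
structure Base {V : Type} [NormedAddCommGroup V] [InnerProductSpace ℝ V]
    [FiniteDimensional ℝ V] (R : NRootSystem V) where
  Δ : Finset V
  subset : Δ ⊆ R.Φ
  indep : LinearIndependent ℝ (fun a : {x : V // x ∈ Δ} => (a : V))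
  coeff : V → V → ℤ
  coeff_spec : ∀ γ ∈ R.Φ, γ = ∑ α ∈ Δ, (coeff γ α : ℝ) • α
  coeff_sign : ∀ γ ∈ R.Φ, (∀ α ∈ Δ, 0 ≤ coeff γ α) ∨ (∀ α ∈ Δ, coeff γ α ≤ 0)

namespace Base

variable {R : NRootSystem V} (B : Base R)

/-- positive roots -/
def IsPos (γ : V) : Prop := γ ∈ R.Φ ∧ ∀ α ∈ B.Δ, 0 ≤ B.coeff γ α

/-- negative roots -/
def IsNeg (γ : V) : Prop := γ ∈ R.Φ ∧ ∀ α ∈ B.Δ, B.coeff γ α ≤ 0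

/-- the height of a root -/
def ht (γ : V) : ℤ := ∑ α ∈ B.Δ, B.coeff γ α

/-- the dual height `ht∨ γ = ht (γ∨)`: the height of the coroot `γ∨ = 2γ/(γ|γ)`
with respect to the basis of simple coroots `α∨ = 2α/(α|α)`, `α ∈ Δ`. -/
def htv (γ : V) : ℝ := ∑ α ∈ B.Δ, (B.coeff γ α : ℝ) * ⟪α, α⟫ / ⟪γ, γ⟫

/-- The length of `w`: the minimal length of an expression of `w` as a product of
simple reflections. -/
def len (w : V ≃ₗᵢ[ℝ] V) : ℕ :=
  sInf {n | ∃ g : Fin n → V, (∀ i, g i ∈ B.Δ) ∧ w = (List.ofFn fun i => sref (g i)).prod}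

/-- `w` is the longest element of the subgroup `H`. -/
def IsLongest (H : Subgroup (V ≃ₗᵢ[ℝ] V)) (w : V ≃ₗᵢ[ℝ] V) : Prop :=
  w ∈ H ∧ ∀ u ∈ H, B.len u ≤ B.len w

/-- `X_I = {w ∈ W | w(Φ_I⁺) ⊆ Φ⁺}`, the set of minimal length coset
representatives of `W/W_I`. -/
def XI (I : Finset V) : Set (V ≃ₗᵢ[ℝ] V) :=
  {w | w ∈ R.Weyl ∧
    ∀ γ, γ ∈ R.Φ → γ ∈ Submodule.span ℝ (I : Set V) → B.IsPos γ → B.IsPos (w γ)}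

/-- `h` is the highest root. -/
def IsHighest (h : V) : Prop :=
  h ∈ R.Φ ∧ ∀ γ ∈ R.Φ, ∀ α ∈ B.Δ, B.coeff γ α ≤ B.coeff h α

/-- `Ĩ = {α ∈ Δ | (h|α) = 0}`, the simple roots orthogonal to the highest root `h`. -/
def Itil (h : V) : Finset V := B.Δ.filter fun α => ⟪h, α⟫ = 0

/-- The level `L(α)` of a long root `α`, where `h` is the highest root:
`L(α) = ht∨(h) − ht∨(α)` if `α > 0` and `L(α) = ht∨(h) − ht∨(α) − 1` if `α < 0`. -/
def level (h α : V) : ℝ :=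
  if B.IsPos α then B.htv h - B.htv α else B.htv h - B.htv α - 1

/-- The elementary step relation `β →_γ α` on long roots (`γ` a positive root):
`α = s_γ(β)` and `L(α) = L(β) + 1`. -/
def Step (h γ β α : V) : Prop :=
  R.IsLong β ∧ R.IsLong α ∧ B.IsPos γ ∧ α = sref γ β ∧
    B.level h α = B.level h β + 1

/-- `g` is the sequence of positive roots of a path
`β = β₀ →_{g 0} β₁ →_{g 1} ⋯ →_{g (n-1)} β_n = α` from `β` to `α`. -/
def IsPathWord (h : V) {n : ℕ} (g : Fin n → V) (β α : V) : Prop :=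
  ∃ c : Fin (n + 1) → V, c 0 = β ∧ c (Fin.last n) = α ∧
    ∀ i : Fin n, B.Step h (g i) (c i.castSucc) (c i.succ)

/-- a path all of whose steps use simple roots -/
def IsSimplePathWord (h : V) {n : ℕ} (g : Fin n → V) (β α : V) : Prop :=
  B.IsPathWord h g β α ∧ ∀ i, g i ∈ B.Δ

/-- there is a path from `β` to `α`, i.e. `α ⪯ β` -/
def HasPath (h β α : V) : Prop := ∃ (n : ℕ) (g : Fin n → V), B.IsPathWord h g β α

/-- there is a simple path from `β` to `α` -/
def HasSimplePath (h β α : V) : Prop :=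
  ∃ (n : ℕ) (g : Fin n → V), B.IsSimplePathWord h g β α

/-- The covering relation `w →_γ w'` for the Bruhat order:
`w' = s_γ w` and `l(w') = l(w) + 1`, for a positive root `γ`. -/
def BStep (γ : V) (w w' : V ≃ₗᵢ[ℝ] V) : Prop :=
  B.IsPos γ ∧ w' = sref γ * w ∧ B.len w' = B.len w + 1

/-- The Bruhat order on `W`: the reflexive–transitive closure of the covering
relations. -/
def bruhatLE : (V ≃ₗᵢ[ℝ] V) → (V ≃ₗᵢ[ℝ] V) → Prop :=
  Relation.ReflTransGen fun w w' => ∃ γ, B.BStep γ w w'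

/-- `x` is an element of `W` with `x(β) = α` of the minimal possible length
`|L(α) − L(β)|` (this is the element `x_{αβ}` when it exists). -/
def MinTake (h β α : V) (x : V ≃ₗᵢ[ℝ] V) : Prop :=
  x ∈ R.Weyl ∧ x β = α ∧ (B.len x : ℝ) = |B.level h α - B.level h β|

/-- `g` is a reduced expression of `x` as a product of simple reflections. -/
def IsReducedWord {n : ℕ} (g : Fin n → V) (x : V ≃ₗᵢ[ℝ] V) : Prop :=
  (∀ i, g i ∈ B.Δ) ∧ x = (List.ofFn fun i => sref (g i)).prod ∧ n = B.len x

/-- The depth of a positive root `β`: the minimal integer `k` such that there is an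
element `w` of `W` of length `k` with `w(β) < 0`. -/
def depth (β : V) : ℕ := sInf {n | ∃ w ∈ R.Weyl, B.len w = n ∧ B.IsNeg (w β)}

end Base

/-!
Write `s_γ β = β - ⟨β, γ∨⟩ γ`. As `s_γ` preserves lengths, it lowers the dual height of a root `β`
by `⟨β, γ∨⟩ (γ|γ) / (β|β) = ⟨γ, β∨⟩`, which is `1` when `β ≠ γ` is long and `(β|γ) > 0`. Such a `β`
is not `±γ`, so by reducedness it has a nonzero coordinate other than the `γ`-coordinate; `s_γ`
keeps that coordinate, hence keeps the sign of `β`, and the level goes up by `1`. For `β = γ` the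
sign flips and `ht∨` drops by `2`, compensated by the `-1` in the level of a negative root. The case
`(β|γ) < 0` is the positive case for `s_γ β`, which `s_γ` sends back to `β`.
-/

omit [FiniteDimensional ℝ V] in
theorem sref_apply (γ β : V) : sref γ β = β - cpair β γ • γ := by
  rw [sref, Submodule.reflection_orthogonal_apply, Submodule.reflection_singleton_apply, cpair,
    real_inner_self_eq_norm_sq, real_inner_comm]
  simp only [RCLike.ofReal_real_eq_id, id, two_smul]
  match_scalars <;> ring

omit [FiniteDimensional ℝ V] in
theorem sref_sref (γ β : V) : sref γ (sref γ β) = β :=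
  Submodule.reflection_reflection _ β

omit [FiniteDimensional ℝ V] in
theorem sref_self (γ : V) : sref γ γ = -γ :=
  Submodule.reflection_orthogonalComplement_singleton_eq_neg γ

omit [FiniteDimensional ℝ V] in
theorem inner_sref_apply_self (γ β : V) : ⟪sref γ β, γ⟫ = -⟪β, γ⟫ := by
  have h := (sref γ).inner_map_map (sref γ β) γ
  rw [sref_sref, sref_self, inner_neg_right] at h
  linarith

omit [FiniteDimensional ℝ V] in
theorem cpair_self {γ : V} (hγ : γ ≠ 0) : cpair γ γ = 2 := by
  rw [cpair, mul_div_assoc, div_self (inner_self_ne_zero.mpr hγ), mul_one]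

namespace NRootSystem

variable (R : NRootSystem V)

theorem inner_self_pos {α : V} (hα : α ∈ R.Φ) : 0 < ⟪α, α⟫ :=
  one_pos.trans_le (R.norm_one_le α hα)

theorem ne_zero_of_mem {α : V} (hα : α ∈ R.Φ) : α ≠ 0 :=
  fun h => R.zero_not_mem (h ▸ hα)

theorem inner_self_le_r {α : V} (hα : α ∈ R.Φ) : ⟪α, α⟫ ≤ R.r :=
  Finset.le_sup' (fun x => ⟪x, x⟫) hα

theorem exists_cpair_eq_intCast {α β : V} (hα : α ∈ R.Φ) (hβ : β ∈ R.Φ) :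
    ∃ n : ℤ, cpair β α = n := by
  obtain ⟨n, hn⟩ := R.pairing_int α hα β hβ
  exact ⟨n, by rw [cpair, hn, mul_div_assoc, div_self (R.inner_self_pos hα).ne', mul_one]⟩

variable {R}

theorem IsLong.sref {β : V} (hβ : R.IsLong β) {γ : V} (hγ : γ ∈ R.Φ) :
    R.IsLong (_root_.sref γ β) :=
  ⟨R.reflect_mem γ hγ β hβ.1, by rw [LinearIsometryEquiv.inner_map_map, hβ.2]⟩

/-- The integer `⟨γ, β∨⟩` is positive, and it is less than `2` because
`|β - γ|² = (2 - ⟨γ, β∨⟩)|β|² - (|β|² - |γ|²)` is positive while `|γ|² ≤ |β|²`. -/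
theorem cpair_eq_one_of_isLong {β γ : V} (hβ : R.IsLong β) (hγ : γ ∈ R.Φ) (hne : β ≠ γ)
    (hpos : 0 < ⟪β, γ⟫) : cpair γ β = 1 := by
  obtain ⟨m, hm⟩ := R.exists_cpair_eq_intCast hβ.1 hγ
  have hr : ⟪β, β⟫ = R.r := hβ.2
  have hrpos : 0 < R.r := hr ▸ R.inner_self_pos hβ.1
  have hmr : (m : ℝ) * R.r = 2 * ⟪β, γ⟫ := by
    rw [← hm, cpair, hr, real_inner_comm, div_mul_cancel₀ _ hrpos.ne']
  have hdist : 0 < R.r - m * R.r + ⟪γ, γ⟫ := by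
    rw [hmr, ← hr]
    linarith [real_inner_sub_sub_self β γ, real_inner_self_pos.mpr (sub_ne_zero.mpr hne)]
  have hm0 : 0 < m := by exact_mod_cast (show (0 : ℝ) < m by nlinarith)
  have hm2 : m < 2 := by exact_mod_cast (show (m : ℝ) < 2 by nlinarith [R.inner_self_le_r hγ])
  rw [hm, show m = 1 by omega, Int.cast_one]

end NRootSystem

namespace Base

variable {R : NRootSystem V} (B : Base R)

theorem coeff_eq_of_eq_sum {x : V} (hx : x ∈ R.Φ) (c : V → ℝ) (hc : x = ∑ δ ∈ B.Δ, c δ • δ)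
    {δ : V} (hδ : δ ∈ B.Δ) : (B.coeff x δ : ℝ) = c δ :=
  (linearIndepOn_finset_iffₛ (v := id) (s := B.Δ)).mp B.indep (fun δ => (B.coeff x δ : ℝ)) c
    ((B.coeff_spec x hx).symm.trans hc) δ hδ

theorem coeff_of_mem {γ : V} (hγ : γ ∈ B.Δ) {δ : V} (hδ : δ ∈ B.Δ) :
    (B.coeff γ δ : ℝ) = if δ = γ then 1 else 0 :=
  B.coeff_eq_of_eq_sum (B.subset hγ) (fun δ => if δ = γ then 1 else 0)
    (by simp [ite_smul, hγ]) hδ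

theorem coeff_sref {β γ : V} (hβ : β ∈ R.Φ) (hγ : γ ∈ B.Δ) {δ : V} (hδ : δ ∈ B.Δ) :
    (B.coeff (sref γ β) δ : ℝ) = B.coeff β δ - if δ = γ then cpair β γ else 0 := by
  refine B.coeff_eq_of_eq_sum (R.reflect_mem γ (B.subset hγ) β hβ)
    (fun δ => B.coeff β δ - if δ = γ then cpair β γ else 0) ?_ hδ
  simp only [sub_smul, Finset.sum_sub_distrib, ite_smul, zero_smul, Finset.sum_ite_eq', if_pos hγ]
  rw [← B.coeff_spec β hβ, sref_apply]

theorem isPos_of_mem {γ : V} (hγ : γ ∈ B.Δ) : B.IsPos γ := by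
  refine ⟨B.subset hγ, fun δ hδ => ?_⟩
  have h : (0 : ℝ) ≤ B.coeff γ δ := by
    rw [B.coeff_of_mem hγ hδ]
    split_ifs <;> norm_num
  exact_mod_cast h

theorem not_isPos_sref_self {γ : V} (hγ : γ ∈ B.Δ) : ¬ B.IsPos (sref γ γ) := by
  intro hpos
  have h := B.coeff_sref (B.subset hγ) hγ hγ
  rw [B.coeff_of_mem hγ hγ, if_pos rfl, if_pos rfl, cpair_self (R.ne_zero_of_mem (B.subset hγ))]
    at h
  have : (0 : ℝ) ≤ B.coeff (sref γ γ) γ := by exact_mod_cast hpos.2 γ hγ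
  linarith

theorem htv_sub_htv_sref {β γ : V} (hβ : β ∈ R.Φ) (hγ : γ ∈ B.Δ) :
    B.htv β - B.htv (sref γ β) = cpair γ β := by
  have hsum : ∑ δ ∈ B.Δ, (B.coeff β δ - B.coeff (sref γ β) δ : ℝ) * ⟪δ, δ⟫
      = cpair β γ * ⟪γ, γ⟫ := by
    rw [Finset.sum_congr rfl fun δ hδ => by rw [B.coeff_sref hβ hγ hδ]]
    simp [ite_mul, hγ]
  rw [htv, htv, LinearIsometryEquiv.inner_map_map, ← Finset.sum_sub_distrib]
  simp only [← sub_div, ← sub_mul]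
  rw [← Finset.sum_div, hsum, cpair, cpair, real_inner_comm,
    div_mul_cancel₀ _ (R.inner_self_pos (B.subset hγ)).ne']

theorem isPos_iff_of_coeff_eq {x y δ : V} (hx : x ∈ R.Φ) (hy : y ∈ R.Φ) (hδ : δ ∈ B.Δ)
    (hxy : B.coeff x δ = B.coeff y δ) (hne : B.coeff x δ ≠ 0) : B.IsPos x ↔ B.IsPos y := by
  have sign_eq {u v : V} (hv : v ∈ R.Φ) (huv : B.coeff u δ = B.coeff v δ) (hu0 : B.coeff u δ ≠ 0)
      (hu : B.IsPos u) : B.IsPos v := by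
    refine ⟨hv, (B.coeff_sign v hv).resolve_right fun hneg => ?_⟩
    have := hu.2 δ hδ
    have := hneg δ hδ
    omega
  exact ⟨sign_eq hy hxy hne, sign_eq hx hxy.symm (hxy ▸ hne)⟩

theorem exists_coeff_ne_zero_of_ne {β γ : V} (hβ : β ∈ R.Φ) (hγ : γ ∈ B.Δ) (hβγ : β ≠ γ)
    (hβγ' : β ≠ -γ) : ∃ δ ∈ B.Δ, δ ≠ γ ∧ B.coeff β δ ≠ 0 := by
  by_contra! hzero
  have hβ_eq : β = (B.coeff β γ : ℝ) • γ := by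
    conv_lhs => rw [B.coeff_spec β hβ]
    refine Finset.sum_eq_single γ (fun δ hδ hδγ => ?_) (absurd hγ)
    rw [hzero δ hδ hδγ, Int.cast_zero, zero_smul]
  rcases R.reduced γ (B.subset hγ) _ (hβ_eq ▸ hβ) with h | h
  · exact hβγ (by rw [hβ_eq, h, one_smul])
  · exact hβγ' (by rw [hβ_eq, h, neg_one_smul])

theorem isPos_sref_iff {β γ : V} (hβ : β ∈ R.Φ) (hγ : γ ∈ B.Δ) (hβγ : β ≠ γ) (hβγ' : β ≠ -γ) :
    B.IsPos (sref γ β) ↔ B.IsPos β := by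
  obtain ⟨δ, hδ, hδγ, hne⟩ := B.exists_coeff_ne_zero_of_ne hβ hγ hβγ hβγ'
  have hcoeff : B.coeff β δ = B.coeff (sref γ β) δ := by
    have := B.coeff_sref hβ hγ hδ
    rw [if_neg hδγ, sub_zero] at this
    exact_mod_cast this.symm
  exact (B.isPos_iff_of_coeff_eq hβ (R.reflect_mem γ (B.subset hγ) β hβ) hδ hcoeff hne).symm

theorem level_sub_level_of_isPos_iff (h : V) {x y : V} (hxy : B.IsPos x ↔ B.IsPos y) :
    B.level h x - B.level h y = B.htv y - B.htv x := by
  by_cases hy : B.IsPos y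
  · rw [level, level, if_pos (hxy.mpr hy), if_pos hy]; ring
  · rw [level, level, if_neg (mt hxy.mp hy), if_neg hy]; ring

theorem level_sref_self (h : V) {γ : V} (hγ : γ ∈ B.Δ) :
    B.level h (sref γ γ) = B.level h γ + 1 := by
  have hhtv := B.htv_sub_htv_sref (B.subset hγ) hγ
  rw [cpair_self (R.ne_zero_of_mem (B.subset hγ))] at hhtv
  rw [level, level, if_neg (B.not_isPos_sref_self hγ), if_pos (B.isPos_of_mem hγ)]
  linarith

theorem level_sref_of_inner_pos (h : V) {β γ : V} (hβ : R.IsLong β) (hγ : γ ∈ B.Δ)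
    (hpos : 0 < ⟪β, γ⟫) : B.level h (sref γ β) = B.level h β + 1 := by
  rcases eq_or_ne β γ with rfl | hβγ
  · exact B.level_sref_self h hγ
  have hβγ' : β ≠ -γ := by
    rintro rfl
    linarith [real_inner_self_nonneg (x := γ), inner_neg_left (𝕜 := ℝ) γ γ]
  have hdiff := B.level_sub_level_of_isPos_iff h (B.isPos_sref_iff hβ.1 hγ hβγ hβγ')
  rw [B.htv_sub_htv_sref hβ.1 hγ, R.cpair_eq_one_of_isLong hβ (B.subset hγ) hβγ hpos] at hdiff
  linarith

theorem step_sref_of_inner_pos (h : V) {β γ : V} (hβ : R.IsLong β) (hγ : γ ∈ B.Δ)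
    (hpos : 0 < ⟪β, γ⟫) : B.Step h γ β (sref γ β) :=
  ⟨hβ, hβ.sref (B.subset hγ), B.isPos_of_mem hγ, rfl, B.level_sref_of_inner_pos h hβ hγ hpos⟩

end Base

theorem level_action_of_simple_general (R : NRootSystem V) (B : Base R) {h : V}
    {β γ α : V}
    (hβ : R.IsLong β) (hγ : γ ∈ B.Δ) (hα : α = sref γ β) :
    (0 < ⟪β, γ⟫ → B.level h α = B.level h β + 1 ∧ B.Step h γ β α) ∧
    (⟪β, γ⟫ = 0 → α = β) ∧
    (⟪β, γ⟫ < 0 → B.level h α = B.level h β - 1 ∧ B.Step h γ α β) := by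
  subst hα
  refine ⟨fun hpos => ⟨B.level_sref_of_inner_pos h hβ hγ hpos,
    B.step_sref_of_inner_pos h hβ hγ hpos⟩, fun hzero => ?_, fun hneg => ?_⟩
  · rw [sref_apply, cpair, hzero, mul_zero, zero_div, zero_smul, sub_zero]
  · have hα := hβ.sref (B.subset hγ)
    have hαγ : 0 < ⟪sref γ β, γ⟫ := by rw [inner_sref_apply_self]; linarith
    have hlevel := B.level_sref_of_inner_pos h hα hγ hαγ
    have hstep := B.step_sref_of_inner_pos h hα hγ hαγ
    rw [sref_sref] at hlevel hstep
    exact ⟨by linarith, hstep⟩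

/-- for a long root `β`, a simple root `γ` and `α = s_γ(β)`:
if `(β|γ) > 0` then `L(α) = L(β) + 1` (so `β →_γ α`); if `(β|γ) = 0` then `α = β`;
if `(β|γ) < 0` then `L(α) = L(β) − 1` (so `α →_γ β`). -/
theorem level_action_of_simple (R : NRootSystem V) (B : Base R) {h : V}
    (hh : B.IsHighest h) {β γ α : V}
    (hβ : R.IsLong β) (hγ : γ ∈ B.Δ) (hα : α = sref γ β) :
    (0 < ⟪β, γ⟫ → B.level h α = B.level h β + 1 ∧ B.Step h γ β α) ∧
    (⟪β, γ⟫ = 0 → α = β) ∧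
    (⟪β, γ⟫ < 0 → B.level h α = B.level h β - 1 ∧ B.Step h γ α β) :=
  level_action_of_simple_general R B hβ hγ hα
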